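/- arXiv:2511.19825 — 4 statements merged into one kernel-verified Lean document; each statement's English description precedes it below -/
import Mathlib

section
/- Let S be a finite-dimensional K-algebra with idempotent e, H = eSe, F(M) = eM, G(N) = Hom_H(eS, N), and let {S_λ}_{λ∈Λ} be H-modules with R¹G(S_λ) = 0 for all λ (where R¹G(N) = Ext¹_H(eS, N)). Set Δ(λ) := G(S_λ). Then an H-module N has a filtration with subquotients among {S_λ} if and only if G(N) has a filtration with subquotients among {Δ(λ)}. -/
/-! Corner ring `eSe` of an idempotent `e` in a ring `S`, the Schur functor
`F : M ↦ eM` and the inverse Schur functor `G : N ↦ Hom_{eSe}(eS, N)`. -/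

section Corner

variable {S : Type} [Ring S] {e : S}

/-- The corner ring `eSe = {x : S | e * x * e = x}` of an idempotent `e`. -/
def Corner (he : e * e = e) : Type := {x : S // e * x * e = x}

namespace Corner

variable {he : e * e = e}

theorem e_mul (x : Corner he) : e * x.1 = x.1 := by
  conv_lhs => rw [← x.2, ← mul_assoc, ← mul_assoc, he]
  rw [x.2]

theorem mul_e (x : Corner he) : x.1 * e = x.1 := by
  conv_lhs => rw [← x.2, mul_assoc, mul_assoc, he, ← mul_assoc]
  rw [x.2]

instance : Zero (Corner he) := ⟨⟨0, by simp⟩⟩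
instance : Add (Corner he) :=
  ⟨fun x y => ⟨x.1 + y.1, by rw [mul_add, add_mul, x.2, y.2]⟩⟩
instance : Neg (Corner he) := ⟨fun x => ⟨-x.1, by rw [mul_neg, neg_mul, x.2]⟩⟩
instance : Mul (Corner he) :=
  ⟨fun x y => ⟨x.1 * y.1, by
    rw [show e * (x.1 * y.1) * e = (e * x.1) * (y.1 * e) by noncomm_ring,
      e_mul x, mul_e y]⟩⟩
instance : One (Corner he) := ⟨⟨e, by rw [he, he]⟩⟩

instance instRing : Ring (Corner he) where
  add_assoc a b c := Subtype.ext (add_assoc _ _ _)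
  zero_add a := Subtype.ext (zero_add _)
  add_zero a := Subtype.ext (add_zero _)
  add_comm a b := Subtype.ext (add_comm _ _)
  neg_add_cancel a := Subtype.ext (neg_add_cancel _)
  mul_assoc a b c := Subtype.ext (mul_assoc _ _ _)
  one_mul a := Subtype.ext (e_mul a)
  mul_one a := Subtype.ext (mul_e a)
  left_distrib a b c := Subtype.ext (left_distrib _ _ _)
  right_distrib a b c := Subtype.ext (right_distrib _ _ _)
  zero_mul a := Subtype.ext (zero_mul _)
  mul_zero a := Subtype.ext (mul_zero _)
  nsmul := nsmulRec
  zsmul := zsmulRec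

end Corner

variable (he : e * e = e)

/-- The additive subgroup `eM = {m | e • m = m}` of an `S`-module `M`. -/
def fixSubgroup (M : Type) [AddCommGroup M] [Module S M] : AddSubgroup M where
  carrier := {m | e • m = m}
  zero_mem' := smul_zero e
  add_mem' := by
    intro a b ha hb
    have ha' : e • a = a := ha
    have hb' : e • b = b := hb
    show e • (a + b) = a + b
    rw [smul_add, ha', hb']
  neg_mem' := by
    intro a ha
    have ha' : e • a = a := ha
    show e • (-a) = -a
    rw [smul_neg, ha']

/-- The Schur functor on objects: `F(M) = eM`, an `eSe`-module. -/
def SchurF (M : Type) [AddCommGroup M] [Module S M] : Type := ↥(fixSubgroup (e := e) M)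

instance (M : Type) [AddCommGroup M] [Module S M] : AddCommGroup (SchurF (e := e) M) :=
  inferInstanceAs (AddCommGroup ↥(fixSubgroup (e := e) M))

instance (M : Type) [AddCommGroup M] [Module S M] :
    Module (Corner he) (SchurF (e := e) M) where
  smul c m := ⟨c.1 • m.1, by
    show e • (c.1 • m.1) = c.1 • m.1
    rw [← mul_smul, Corner.e_mul c]⟩
  one_smul m := Subtype.ext m.2
  mul_smul c c' m := Subtype.ext (mul_smul c.1 c'.1 m.1)
  smul_zero c := Subtype.ext (smul_zero c.1)
  smul_add c m m' := Subtype.ext (smul_add c.1 m.1 m'.1)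
  add_smul c c' m := Subtype.ext (add_smul c.1 c'.1 m.1)
  zero_smul m := Subtype.ext (zero_smul S m.1)

/-- `eS` as a left `eSe`-module (special case of `SchurF` with `M = S`). -/
abbrev ES : Type := SchurF (e := e) S

theorem ES.e_mul' (s : ES (e := e)) : e * s.1 = s.1 := s.2

/-- An element `s * a` of `eS`, for `s ∈ eS` and `a ∈ S`. -/
def ES.mulRight (s : ES (e := e)) (a : S) : ES (e := e) :=
  ⟨s.1 * a, show e • (s.1 * a) = s.1 * a by
    show e * (s.1 * a) = s.1 * a
    rw [← mul_assoc, ES.e_mul' s]⟩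

/-- The inverse Schur functor on objects: `G(N) = Hom_{eSe}(eS, N)`. -/
abbrev SchurG (N : Type) [AddCommGroup N] [Module (Corner he) N] : Type :=
  ES (e := e) →ₗ[Corner he] N

/-- The left `S`-module structure on `G(N) = Hom_{eSe}(eS, N)`, coming from the
right multiplication action of `S` on `eS`:  `(a • φ)(s) = φ(s * a)`. -/
noncomputable instance (N : Type) [AddCommGroup N] [Module (Corner he) N] :
    Module S (SchurG he N) where
  smul a φ :=
    { toFun := fun s => φ (s.mulRight a)
      map_add' := by
        intro s s'
        show φ ((s + s').mulRight a) = φ (s.mulRight a) + φ (s'.mulRight a)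
        rw [← map_add]
        congr 1
        apply Subtype.ext
        show (s.1 + s'.1) * a = s.1 * a + s'.1 * a
        exact add_mul _ _ _
      map_smul' := by
        intro c s
        show φ ((c • s).mulRight a) = (RingHom.id (Corner he)) c • φ (s.mulRight a)
        rw [RingHom.id_apply, ← map_smul]
        congr 1
        apply Subtype.ext
        show (c.1 * s.1) * a = c.1 * (s.1 * a)
        exact mul_assoc _ _ _ }
  one_smul φ := by
    apply LinearMap.ext; intro s
    show φ _ = φ s
    congr 1
    exact Subtype.ext (mul_one s.1)
  mul_smul a b φ := by
    apply LinearMap.ext; intro s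
    show φ _ = φ _
    congr 1
    exact Subtype.ext (mul_assoc s.1 a b).symm
  smul_zero a := by
    apply LinearMap.ext; intro s
    rfl
  smul_add a φ ψ := by
    apply LinearMap.ext; intro s
    rfl
  add_smul a b φ := by
    apply LinearMap.ext; intro s
    show φ _ = φ _ + φ _
    rw [← map_add]
    congr 1
    exact Subtype.ext (mul_add s.1 a b)
  zero_smul φ := by
    apply LinearMap.ext; intro s
    show φ (ES.mulRight s 0) = 0
    have h0 : ES.mulRight (e := e) s 0 = 0 := Subtype.ext (mul_zero s.1)
    rw [h0, map_zero]

/-- The Schur functor on morphisms (restriction of `f` to `eM → eM'`). -/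
def SchurF.map {M M' : Type} [AddCommGroup M] [Module S M] [AddCommGroup M'] [Module S M']
    (f : M →ₗ[S] M') : SchurF (e := e) M →ₗ[Corner he] SchurF (e := e) M' where
  toFun m := ⟨f m.1, show e • f m.1 = f m.1 by rw [← map_smul, m.2]⟩
  map_add' m m' := Subtype.ext (map_add f m.1 m'.1)
  map_smul' c m := Subtype.ext (map_smul f c.1 m.1)

/-- The inverse Schur functor on morphisms (postcomposition with `u`). -/
noncomputable def SchurG.map {N N' : Type} [AddCommGroup N] [Module (Corner he) N]
    [AddCommGroup N'] [Module (Corner he) N'] (u : N →ₗ[Corner he] N') :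
    SchurG he N →ₗ[S] SchurG he N' where
  toFun φ := u.comp φ
  map_add' φ ψ := LinearMap.ext fun s => map_add u _ _
  map_smul' a φ := rfl

end Corner

/-- An extension `0 → B → E → A → 0` of modules over a ring `H`. -/
structure ModuleExtension (H A B : Type) [Ring H]
    [AddCommGroup A] [Module H A] [AddCommGroup B] [Module H B] where
  E : Type
  [addE : AddCommGroup E]
  [modE : Module H E]
  incl : B →ₗ[H] E
  proj : E →ₗ[H] A
  inj : Function.Injective incl
  surj : Function.Surjective proj
  exact : Function.Exact incl proj

attribute [instance] ModuleExtension.addE ModuleExtension.modE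

/-- An extension splits if the projection admits a module section. -/
def ModuleExtension.Splits {H A B : Type} [Ring H] [AddCommGroup A] [Module H A]
    [AddCommGroup B] [Module H B] (X : ModuleExtension H A B) : Prop :=
  ∃ s : A →ₗ[H] X.E, X.proj ∘ₗ s = LinearMap.id

/-- `Ext¹_H(A, B) ≠ 0`: there is a non-split extension `0 → B → E → A → 0`. -/
def HasNonSplitExt (H A B : Type) [Ring H] [AddCommGroup A] [Module H A]
    [AddCommGroup B] [Module H B] : Prop :=
  ∃ X : ModuleExtension H A B, ¬ X.Splits

/-- `M` has a finite filtration by submodules whose successive subquotients are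
each isomorphic to some member of the family `fam`. -/
def HasFiltrationAmong (R M : Type) [Ring R] [AddCommGroup M] [Module R M]
    {Λ : Type} (fam : Λ → Type) [∀ l, AddCommGroup (fam l)] [∀ l, Module R (fam l)] :
    Prop :=
  ∃ (t : ℕ) (F : Fin (t + 1) → Submodule R M),
    Monotone F ∧ F 0 = ⊥ ∧ F (Fin.last t) = ⊤ ∧
    ∀ i : Fin t, ∃ l : Λ,
      Nonempty ((↥(F i.succ) ⧸
        Submodule.comap (F i.succ).subtype (F i.castSucc)) ≃ₗ[R] fam l)

/-! `G` is exact on a short exact sequence `0 → P → Q → Q ⧸ P → 0` as soon as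
`Ext¹_H(eS, P) = 0`, and by dévissage along a filtration of `N` with subquotients among the
`S_λ` this vanishing holds for every step; so `G` carries the filtration of `N` to one of `G(N)`
with subquotients `G(S_λ) = Δ(λ)`. Conversely `F` is exact and `F ∘ G ≅ id`, so `F` carries a
`Δ`-filtration of `G(N)` to an `{S_λ}`-filtration of `F(G(N)) ≅ N`. -/

abbrev Submodule.Subquotient {R M : Type} [Ring R] [AddCommGroup M] [Module R M]
    (Q P : Submodule R M) : Type :=
  ↥Q ⧸ P.comap Q.subtype

namespace Submodule

variable {R M M₂ : Type} [Ring R] [AddCommGroup M] [Module R M] [AddCommGroup M₂] [Module R M₂]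

noncomputable def subquotientEquivOfSurjective {Q P : Submodule R M} (f : ↥Q →ₗ[R] M₂)
    (hker : LinearMap.ker f = P.comap Q.subtype) (hf : Function.Surjective f) :
    Q.Subquotient P ≃ₗ[R] M₂ :=
  (quotEquivOfEq _ _ hker.symm).trans (f.quotKerEquivOfSurjective hf)

noncomputable def subquotientMapEquiv (g : M ≃ₗ[R] M₂) (Q P : Submodule R M) :
    Q.Subquotient P ≃ₗ[R] (Q.map (g : M →ₗ[R] M₂)).Subquotient (P.map (g : M →ₗ[R] M₂)) :=
  Quotient.equiv _ _ (g.submoduleMap Q) <| by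
    ext ⟨_, y, hy, rfl⟩
    rw [mem_map_equiv]
    change (g.submoduleMap Q).symm (g.submoduleMap Q ⟨y, hy⟩) ∈ _ ↔ _
    simp

end Submodule

namespace HasFiltrationAmong

variable {R R' M M' : Type} [Ring R] [Ring R'] [AddCommGroup M] [Module R M]
  [AddCommGroup M'] [Module R' M'] {Λ : Type} {fam fam' : Λ → Type}
  [∀ l, AddCommGroup (fam l)] [∀ l, Module R (fam l)]
  [∀ l, AddCommGroup (fam' l)] [∀ l, Module R' (fam' l)]

/-- `C` is an invariant propagated up the filtration, for maps `Φ` that only behave well on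
steps whose lower end satisfies it. -/
theorem map_of_step (Φ : Submodule R M → Submodule R' M') (C : Submodule R M → Prop)
    (hΦ : Monotone Φ) (hbot : Φ ⊥ = ⊥) (htop : Φ ⊤ = ⊤) (hC : C ⊥)
    (hstep : ∀ (P Q : Submodule R M) (l : Λ), P ≤ Q → C P → (Q.Subquotient P ≃ₗ[R] fam l) →
      C Q ∧ Nonempty ((Φ Q).Subquotient (Φ P) ≃ₗ[R'] fam' l))
    (h : HasFiltrationAmong R M fam) : HasFiltrationAmong R' M' fam' := by
  obtain ⟨t, F, hF, h0, hlast, hsub⟩ := h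
  choose l u using hsub
  have hle (i : Fin t) : F i.castSucc ≤ F i.succ := hF (Fin.castSucc_le_succ i)
  have hCF (i : Fin (t + 1)) : C (F i) := by
    induction i using Fin.induction with
    | zero => rwa [h0]
    | succ i ih => exact (hstep _ _ _ (hle i) ih (u i).some).1
  exact ⟨t, Φ ∘ F, hΦ.comp hF, by simp [h0, hbot], by simp [hlast, htop],
    fun i => ⟨l i, (hstep _ _ _ (hle i) (hCF _) (u i).some).2⟩⟩

theorem of_linearEquiv {M₂ : Type} [AddCommGroup M₂] [Module R M₂] {fam₂ : Λ → Type}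
    [∀ l, AddCommGroup (fam₂ l)] [∀ l, Module R (fam₂ l)] (g : M ≃ₗ[R] M₂)
    (v : ∀ l, fam l ≃ₗ[R] fam₂ l) (h : HasFiltrationAmong R M fam) :
    HasFiltrationAmong R M₂ fam₂ := by
  refine h.map_of_step (Submodule.map (g : M →ₗ[R] M₂)) (fun _ => True)
    (fun _ _ => Submodule.map_mono) (Submodule.map_bot _) ?_ trivial
    fun P Q l _ _ u =>
      ⟨trivial, ⟨((Submodule.subquotientMapEquiv g Q P).symm.trans u).trans (v l)⟩⟩
  simp

end HasFiltrationAmong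

/-- `Ext¹_H(A, B) = 0`, in the form: every extension of `A` by `B` splits. -/
def ExtOneVanishes (H A B : Type) [Ring H] [AddCommGroup A] [Module H A]
    [AddCommGroup B] [Module H B] : Prop :=
  ∀ X : ModuleExtension H A B, X.Splits

namespace ExtOneVanishes

variable {H A B B' : Type} [Ring H] [AddCommGroup A] [Module H A]
  [AddCommGroup B] [Module H B] [AddCommGroup B'] [Module H B']

theorem of_linearEquiv (g : B ≃ₗ[H] B') (h : ExtOneVanishes H A B) :
    ExtOneVanishes H A B' := fun X =>
  h { E := X.E
      incl := X.incl ∘ₗ (g : B →ₗ[H] B')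
      proj := X.proj
      inj := X.inj.comp g.injective
      surj := X.surj
      exact := LinearEquiv.precomp_exact_iff_exact.mpr X.exact }

theorem of_subsingleton [Subsingleton B] : ExtOneVanishes H A B := by
  intro X
  have hinj : Function.Injective X.proj :=
    (LinearMap.injective_iff_eq_zero_of_exact X.exact).mpr
      (LinearMap.ext fun b => by rw [Subsingleton.elim b 0, map_zero, LinearMap.zero_apply])
  let g := LinearEquiv.ofBijective X.proj ⟨hinj, X.surj⟩
  exact ⟨g.symm, LinearMap.ext g.apply_symm_apply⟩

theorem exists_lift {M : Type} [AddCommGroup M] [Module H M] {P : Submodule H M}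
    (h : ExtOneVanishes H A P) (ψ : A →ₗ[H] M ⧸ P) : ∃ φ : A →ₗ[H] M, P.mkQ ∘ₗ φ = ψ := by
  -- the pullback of `M → M ⧸ P` along `ψ`, an extension of `A` by `P`
  let E := LinearMap.ker (ψ ∘ₗ LinearMap.fst H A M - P.mkQ ∘ₗ LinearMap.snd H A M)
  have mem_E (a : A) (m : M) : (a, m) ∈ E ↔ P.mkQ m = ψ a := by
    simp [E, sub_eq_zero, eq_comm (b := ψ a)]
  obtain ⟨σ, hσ⟩ := h
    { E := E
      incl := LinearMap.codRestrict E (LinearMap.inr H A M ∘ₗ P.subtype)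
        fun p => (mem_E 0 p).2 (by simp)
      proj := LinearMap.fst H A M ∘ₗ E.subtype
      inj := fun p q hpq => Subtype.ext (congrArg (fun x : E => x.1.2) hpq)
      surj := fun a => by
        obtain ⟨m, hm⟩ := P.mkQ_surjective (ψ a)
        exact ⟨⟨(a, m), (mem_E a m).2 hm⟩, rfl⟩
      exact := by
        rintro ⟨⟨a, m⟩, hx⟩
        constructor
        · rintro (rfl : a = 0)
          have hm : m ∈ P := by simpa using (mem_E 0 m).1 hx
          exact ⟨⟨m, hm⟩, rfl⟩
        · rintro ⟨p, hp⟩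
          exact congrArg (fun x : E => x.1.1) hp.symm }
  refine ⟨LinearMap.snd H A M ∘ₗ E.subtype ∘ₗ σ, LinearMap.ext fun a => ?_⟩
  have hσa : (σ a).1.1 = a := LinearMap.congr_fun hσ a
  simpa [hσa] using (mem_E _ _).1 (σ a).2

theorem of_submodule_of_quotient (B₀ : Submodule H B) (h₀ : ExtOneVanishes H A B₀)
    (h₁ : ExtOneVanishes H A (B ⧸ B₀)) : ExtOneVanishes H A B := by
  intro X
  let B₀' := B₀.map X.incl
  have hB₀' : B₀' ≤ LinearMap.ker X.proj :=
    LinearMap.map_le_range.trans X.exact.linearMap_ker_eq.ge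
  obtain ⟨s, hs⟩ := h₁
    { E := X.E ⧸ B₀'
      incl := B₀.mapQ B₀' X.incl (Submodule.le_comap_map _ _)
      proj := B₀'.liftQ X.proj hB₀'
      inj := LinearMap.ker_eq_bot.mp <| by
        rw [Submodule.ker_mapQ, Submodule.comap_map_eq_of_injective X.inj,
          Submodule.mkQ_map_self]
      surj := fun a => by
        obtain ⟨x, hx⟩ := X.surj a
        exact ⟨B₀'.mkQ x, hx⟩
      exact := LinearMap.exact_iff.mpr <| by
        rw [Submodule.ker_liftQ, Submodule.range_mapQ, X.exact.linearMap_ker_eq] }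
  -- a splitting of `E ⧸ B₀ → A` lifts to `E` because `Ext¹(A, B₀) = 0`
  obtain ⟨σ, hσ⟩ := (h₀.of_linearEquiv (B₀.equivMapOfInjective X.incl X.inj)).exists_lift s
  refine ⟨σ, LinearMap.ext fun a => ?_⟩
  calc X.proj (σ a) = B₀'.liftQ X.proj hB₀' (B₀'.mkQ (σ a)) := rfl
    _ = a := by rw [← LinearMap.comp_apply B₀'.mkQ, hσ, ← LinearMap.comp_apply, hs]; rfl

end ExtOneVanishes

namespace SchurG

variable {S : Type} [Ring S] {e : S} (he : e * e = e)

def idem : ES (e := e) := ⟨e, show e * e = e from he⟩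

def mulRightE : ES (e := e) →ₗ[Corner he] Corner he where
  toFun s := ⟨s.1 * e, by rw [← mul_assoc, ES.e_mul' s, mul_assoc, he]⟩
  map_add' s s' := Subtype.ext (add_mul s.1 s'.1 e)
  map_smul' c s := Subtype.ext (mul_assoc c.1 s.1 e)

theorem mulRightE_idem : mulRightE he (idem he) = 1 := Subtype.ext he

theorem mulRightE_smul_idem (s : ES (e := e)) : mulRightE he s • idem he = s.mulRight e :=
  Subtype.ext (by change s.1 * e * e = s.1 * e; rw [mul_assoc, he])

noncomputable def counit (N : Type) [AddCommGroup N] [Module (Corner he) N] :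
    SchurF (e := e) (SchurG he N) ≃ₗ[Corner he] N where
  toFun φ := φ.1 (idem he)
  map_add' _ _ := rfl
  map_smul' c φ := by
    change φ.1 ((idem he).mulRight c.1) = c • φ.1 (idem he)
    rw [← φ.1.map_smul]
    exact congrArg φ.1 (Subtype.ext ((Corner.e_mul c).trans (Corner.mul_e c).symm))
  invFun n := ⟨(mulRightE he).smulRight n, LinearMap.ext fun s => by
    change mulRightE he (s.mulRight e) • n = mulRightE he s • n
    rw [← mulRightE_smul_idem, map_smul, mulRightE_idem, smul_eq_mul, mul_one]⟩
  left_inv φ := by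
    refine Subtype.ext (LinearMap.ext fun s => ?_)
    have hφ : e • φ.1 = φ.1 := φ.2
    calc mulRightE he s • φ.1 (idem he) = φ.1 (s.mulRight e) := by
          rw [← φ.1.map_smul, mulRightE_smul_idem]
      _ = φ.1 s := LinearMap.congr_fun hφ s
  right_inv n := by
    change mulRightE he (idem he) • n = n
    rw [mulRightE_idem, one_smul]

variable {N : Type} [AddCommGroup N] [Module (Corner he) N]

def submodule (P : Submodule (Corner he) N) : Submodule S (SchurG he N) where
  carrier := {φ | ∀ s, φ s ∈ P}
  add_mem' hφ hψ s := P.add_mem (hφ s) (hψ s)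
  zero_mem' _ := P.zero_mem
  smul_mem' a _ hφ s := hφ (s.mulRight a)

theorem submodule_mono : Monotone (submodule he (N := N)) :=
  fun _ _ hPQ _ hφ s => hPQ (hφ s)

theorem submodule_bot : submodule he (⊥ : Submodule (Corner he) N) = ⊥ :=
  eq_bot_iff.mpr fun _ hφ => (Submodule.mem_bot S).mpr (LinearMap.ext hφ)

theorem submodule_top : submodule he (⊤ : Submodule (Corner he) N) = ⊤ :=
  eq_top_iff.mpr fun _ _ _ => Submodule.mem_top

noncomputable def toSubquotient {L : Type} [AddCommGroup L] [Module (Corner he) L]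
    {Q P : Submodule (Corner he) N} (u : Q.Subquotient P ≃ₗ[Corner he] L) :
    ↥(submodule he Q) →ₗ[S] SchurG he L where
  toFun φ := (u : Q.Subquotient P →ₗ[Corner he] L) ∘ₗ (P.comap Q.subtype).mkQ ∘ₗ
    LinearMap.codRestrict Q φ.1 φ.2
  map_add' _ _ := LinearMap.ext fun _ => by
    simp only [LinearMap.comp_apply, LinearMap.add_apply, ← map_add]
    rfl
  map_smul' _ _ := rfl

theorem toSubquotient_apply {L : Type} [AddCommGroup L] [Module (Corner he) L]
    {Q P : Submodule (Corner he) N} (u : Q.Subquotient P ≃ₗ[Corner he] L)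
    (φ : ↥(submodule he Q)) (s : ES (e := e)) :
    toSubquotient he u φ s = u (Submodule.Quotient.mk ⟨φ.1 s, φ.2 s⟩) :=
  rfl

noncomputable def subquotientEquiv {L : Type} [AddCommGroup L] [Module (Corner he) L]
    {Q P : Submodule (Corner he) N}
    (hP : ExtOneVanishes (Corner he) (ES (e := e)) (P.comap Q.subtype))
    (u : Q.Subquotient P ≃ₗ[Corner he] L) :
    (submodule he Q).Subquotient (submodule he P) ≃ₗ[S] SchurG he L := by
  refine Submodule.subquotientEquivOfSurjective (toSubquotient he u) ?_ fun ψ => ?_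
  · ext φ
    refine LinearMap.ext_iff.trans (forall_congr' fun s => ?_)
    rw [toSubquotient_apply, LinearMap.zero_apply, LinearEquiv.map_eq_zero_iff,
      Submodule.Quotient.mk_eq_zero]
    rfl
  · obtain ⟨φ, hφ⟩ := hP.exists_lift ((u.symm : L →ₗ[Corner he] Q.Subquotient P) ∘ₗ ψ)
    refine ⟨⟨Q.subtype ∘ₗ φ, fun s => (φ s).2⟩, LinearMap.ext fun s => ?_⟩
    rw [toSubquotient_apply, ← u.apply_symm_apply (ψ s)]
    exact congrArg u (LinearMap.congr_fun hφ s)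

end SchurG

namespace SchurF

variable {S : Type} [Ring S] {e : S} (he : e * e = e)
  {M : Type} [AddCommGroup M] [Module S M]

def submodule (Q : Submodule S M) : Submodule (Corner he) (SchurF (e := e) M) where
  carrier := {m | m.1 ∈ Q}
  add_mem' := Q.add_mem
  zero_mem' := Q.zero_mem
  smul_mem' c _ hm := Q.smul_mem c.1 hm

theorem submodule_mono : Monotone (submodule he (M := M)) :=
  fun _ _ hPQ _ hm => hPQ hm

theorem submodule_bot : submodule he (⊥ : Submodule S M) = ⊥ :=
  eq_bot_iff.mpr fun _ hm => (Submodule.mem_bot _).mpr (Subtype.ext ((Submodule.mem_bot S).mp hm))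

theorem submodule_top : submodule he (⊤ : Submodule S M) = ⊤ :=
  eq_top_iff.mpr fun _ _ => Submodule.mem_top

def toSubquotient (Q P : Submodule S M) :
    ↥(submodule he Q) →ₗ[Corner he] SchurF (e := e) (Q.Subquotient P) where
  toFun m := ⟨(P.comap Q.subtype).mkQ ⟨m.1.1, m.2⟩, by
    change e • (P.comap Q.subtype).mkQ _ = _
    rw [← map_smul]
    exact congrArg _ (Subtype.ext m.1.2)⟩
  map_add' m m' := Subtype.ext (map_add (P.comap Q.subtype).mkQ ⟨m.1.1, m.2⟩ ⟨m'.1.1, m'.2⟩)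
  map_smul' c m := Subtype.ext ((P.comap Q.subtype).mkQ.map_smul c.1 ⟨m.1.1, m.2⟩)

theorem toSubquotient_coe (Q P : Submodule S M) (m : ↥(submodule he Q)) :
    (toSubquotient he Q P m).1 = Submodule.Quotient.mk ⟨m.1.1, m.2⟩ :=
  rfl

noncomputable def subquotientEquiv (Q P : Submodule S M) :
    (submodule he Q).Subquotient (submodule he P) ≃ₗ[Corner he]
      SchurF (e := e) (Q.Subquotient P) := by
  refine Submodule.subquotientEquivOfSurjective (toSubquotient he Q P) ?_ fun y => ?_
  · ext m
    change _ = 0 ↔ (⟨m.1.1, m.2⟩ : ↥Q) ∈ P.comap Q.subtype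
    rw [← Submodule.Quotient.mk_eq_zero, ← toSubquotient_coe]
    exact ⟨fun h => h ▸ rfl, fun h => Subtype.ext h⟩
  · obtain ⟨q, hq⟩ := Submodule.Quotient.mk_surjective _ y.1
    have hy : e • y.1 = y.1 := y.2
    refine ⟨⟨⟨(e • q).1, show e • e • q.1 = e • q.1 by rw [smul_smul, he]⟩, (e • q).2⟩,
      Subtype.ext ?_⟩
    rw [toSubquotient_coe, ← hy, ← hq]
    exact Submodule.Quotient.mk_smul _ e q

def mapEquiv {M' : Type} [AddCommGroup M'] [Module S M'] (g : M ≃ₗ[S] M') :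
    SchurF (e := e) M ≃ₗ[Corner he] SchurF (e := e) M' :=
  LinearEquiv.ofLinearMap (SchurF.map he (g : M →ₗ[S] M')) (SchurF.map he (g.symm : M' →ₗ[S] M))
    (LinearMap.ext fun m => Subtype.ext (g.apply_symm_apply m.1))
    (LinearMap.ext fun m => Subtype.ext (g.symm_apply_apply m.1))

end SchurF

section Filtrations

variable {S : Type} [Ring S] {e : S} (he : e * e = e) {Λ : Type}

theorem HasFiltrationAmong.schurF {M : Type} [AddCommGroup M] [Module S M] {fam : Λ → Type}
    [∀ l, AddCommGroup (fam l)] [∀ l, Module S (fam l)] (h : HasFiltrationAmong S M fam) :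
    HasFiltrationAmong (Corner he) (SchurF (e := e) M) fun l => SchurF (e := e) (fam l) :=
  h.map_of_step (SchurF.submodule he) (fun _ => True) (SchurF.submodule_mono he)
    (SchurF.submodule_bot he) (SchurF.submodule_top he) trivial fun P Q _ _ _ u =>
      ⟨trivial, ⟨(SchurF.subquotientEquiv he Q P).trans (SchurF.mapEquiv he u)⟩⟩

variable {N : Type} [AddCommGroup N] [Module (Corner he) N] {Sl : Λ → Type}
  [∀ l, AddCommGroup (Sl l)] [∀ l, Module (Corner he) (Sl l)]

theorem HasFiltrationAmong.schurG
    (hSl : ∀ l, ExtOneVanishes (Corner he) (ES (e := e)) (Sl l))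
    (h : HasFiltrationAmong (Corner he) N Sl) :
    HasFiltrationAmong S (SchurG he N) fun l => SchurG he (Sl l) := by
  refine h.map_of_step (SchurG.submodule he) (fun P => ExtOneVanishes (Corner he) (ES (e := e)) P)
    (SchurG.submodule_mono he) (SchurG.submodule_bot he) (SchurG.submodule_top he)
    ExtOneVanishes.of_subsingleton fun P Q l hPQ hP u => ?_
  have hP' : ExtOneVanishes (Corner he) (ES (e := e)) (P.comap Q.subtype) :=
    hP.of_linearEquiv (Submodule.comapSubtypeEquivOfLe hPQ).symm
  exact ⟨hP'.of_submodule_of_quotient _ ((hSl l).of_linearEquiv u.symm),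
    ⟨SchurG.subquotientEquiv he hP' u⟩⟩

theorem HasFiltrationAmong.of_schurG
    (h : HasFiltrationAmong S (SchurG he N) fun l => SchurG he (Sl l)) :
    HasFiltrationAmong (Corner he) N Sl :=
  (h.schurF he).of_linearEquiv (SchurG.counit he N) fun l => SchurG.counit he (Sl l)

end Filtrations

theorem stmt10_general (S : Type) [Ring S]
    (e : S) (he : e * e = e)
    (Λ : Type) (Sl : Λ → Type)
    [∀ l, AddCommGroup (Sl l)] [∀ l, Module (Corner he) (Sl l)]
    (hR1G : ∀ (l : Λ) (X : ModuleExtension (Corner he) (ES (e := e)) (Sl l)), X.Splits)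
    (N : Type) [AddCommGroup N] [Module (Corner he) N] :
    HasFiltrationAmong (Corner he) N Sl ↔
      HasFiltrationAmong S (SchurG he N) (fun l => SchurG he (Sl l)) :=
  ⟨HasFiltrationAmong.schurG he hR1G, HasFiltrationAmong.of_schurG he⟩

/-- let `S` be a finite-dimensional `K`-algebra with idempotent
`e`, `H = eSe`, `F(M) = eM`, `G(N) = Hom_H(eS, N)`, and let `{S_λ}` be
`H`-modules with `R¹G(S_λ) = Ext¹_H(eS, S_λ) = 0` for all `λ` (expressed by the
splitting of all extensions of `eS` by `S_λ`).  Setting `Δ(λ) := G(S_λ)`, an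
`H`-module `N` has a filtration with subquotients among `{S_λ}` if and only if
the `S`-module `G(N)` has a filtration with subquotients among `{Δ(λ)}`. -/
theorem stmt10 (K S : Type) [Field K] [Ring S] [Algebra K S] [FiniteDimensional K S]
    (e : S) (he : e * e = e)
    (Λ : Type) [Finite Λ] (Sl : Λ → Type)
    [∀ l, AddCommGroup (Sl l)] [∀ l, Module (Corner he) (Sl l)]
    (hR1G : ∀ (l : Λ) (X : ModuleExtension (Corner he) (ES (e := e)) (Sl l)), X.Splits)
    (N : Type) [AddCommGroup N] [Module (Corner he) N] :
    HasFiltrationAmong (Corner he) N Sl ↔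
      HasFiltrationAmong S (SchurG he N) (fun l => SchurG he (Sl l)) :=
  stmt10_general S e he Λ Sl hR1G N
end

section
/- Let B be an algebra with elements S, R ∈ B⊗B and maps σ, ρ ∈ End_K(B⊗B) satisfying the quantum wreath product conditions, and consider B⊗B⊗B with the induced operators σ_i, ρ_i, S_i (i = 1, 2, |i−j| = 1). Assuming the conditions σ_j σ_i(S_j) = S_i, σ_i(S)S + ρ(S) + σ(R) = S² + R (P3), and the PBW conditions (P4)–(P8), the following identities hold: (a) σ_i(S_j)S_i + ρ_i(S_j) = S_i S_j; (b) σ_i(S_j S_i) = S_j σ_i(S_j) + σ_i ρ_j(S_i); (c) ρ_i(S_j S_i) = S_j ρ_i(S_j) + ρ_i ρ_j(S_i). -/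
/-!
The conditions (P2) and the first identity of (P4) pass from `B ⊗ B` to `B ⊗ B ⊗ B` in either
pair of positions: `σ ⊗ 1` and `ρ ⊗ 1` act factorwise, and both placements are conjugates of
`_ ⊗ 1` by an algebra isomorphism. Then (a) is (P4) at `x = σ_j(S_i)`, simplified by (P8)
(`σ_i σ_j (S_i) = S_j` and `ρ_i σ_j (S_i) = 0`); (b) and (c) follow by applying `σ_i`,
resp. `ρ_i`, to (a) with `i` and `j` swapped and expanding with (P2).
-/

open TensorProduct

noncomputable section

variable (K B : Type) [CommRing K] [Ring B] [Algebra K B]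

/-- `φ₁ ∈ End_K(B^{⊗3})`: apply `φ ∈ End_K(B ⊗ B)` in positions (1,2). -/
def act1 (φ : (B ⊗[K] B) →ₗ[K] (B ⊗[K] B)) :
    (B ⊗[K] (B ⊗[K] B)) →ₗ[K] (B ⊗[K] (B ⊗[K] B)) :=
  (TensorProduct.assoc K B B B).toLinearMap ∘ₗ (LinearMap.rTensor B φ) ∘ₗ
    (TensorProduct.assoc K B B B).symm.toLinearMap

/-- `φ₂ ∈ End_K(B^{⊗3})`: apply `φ ∈ End_K(B ⊗ B)` in positions (2,3). -/
def act2 (φ : (B ⊗[K] B) →ₗ[K] (B ⊗[K] B)) :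
    (B ⊗[K] (B ⊗[K] B)) →ₗ[K] (B ⊗[K] (B ⊗[K] B)) :=
  LinearMap.lTensor B φ

/-- `Z₁ ∈ B^{⊗3}`: the element `Z ⊗ 1` for `Z ∈ B ⊗ B`. -/
def el1 (Z : B ⊗[K] B) : B ⊗[K] (B ⊗[K] B) :=
  (TensorProduct.assoc K B B B) (Z ⊗ₜ (1 : B))

/-- `Z₂ ∈ B^{⊗3}`: the element `1 ⊗ Z` for `Z ∈ B ⊗ B`. -/
def el2 (Z : B ⊗[K] B) : B ⊗[K] (B ⊗[K] B) :=
  (1 : B) ⊗ₜ Z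

/-- Condition (P2) together with the first identity of (P4). -/
structure QuantumWreathCompatible {K A : Type*} [CommSemiring K] [Semiring A] [Module K A]
    (σ ρ : A →ₗ[K] A) (S : A) : Prop where
  map_mul_sigma : ∀ a b, σ (a * b) = σ a * σ b
  map_mul_rho : ∀ a b, ρ (a * b) = σ a * ρ b + ρ a * b
  sigma_sigma_mul_add : ∀ x, σ (σ x) * S + ρ (σ x) + σ (ρ x) = S * σ x

namespace QuantumWreathCompatible

section Consequences

variable {K A : Type*} [CommSemiring K] [Semiring A] [Module K A]
  {σ₁ ρ₁ σ₂ ρ₂ : A →ₗ[K] A} {S₁ S₂ : A}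

theorem sigma_mul_add_rho_eq_mul (h₁ : QuantumWreathCompatible σ₁ ρ₁ S₁)
    (hS₂ : S₂ = σ₁ (σ₂ S₁)) (hρ₁ : ρ₁ (σ₂ S₁) = 0) :
    σ₁ S₂ * S₁ + ρ₁ S₂ = S₁ * S₂ := by
  simpa only [hρ₁, map_zero, add_zero, ← hS₂] using h₁.sigma_sigma_mul_add (σ₂ S₁)

theorem sigma_mul_eq (h₁ : QuantumWreathCompatible σ₁ ρ₁ S₁)
    (h₂ : QuantumWreathCompatible σ₂ ρ₂ S₂) (hS₁ : S₁ = σ₂ (σ₁ S₂)) (hρ₂ : ρ₂ (σ₁ S₂) = 0)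
    (hS₂ : S₂ = σ₁ (σ₂ S₁)) :
    σ₁ (S₂ * S₁) = S₂ * σ₁ S₂ + σ₁ (ρ₂ S₁) := by
  rw [← h₂.sigma_mul_add_rho_eq_mul hS₁ hρ₂, map_add, h₁.map_mul_sigma, ← hS₂]

theorem rho_mul_eq (h₁ : QuantumWreathCompatible σ₁ ρ₁ S₁)
    (h₂ : QuantumWreathCompatible σ₂ ρ₂ S₂) (hS₁ : S₁ = σ₂ (σ₁ S₂)) (hρ₂ : ρ₂ (σ₁ S₂) = 0)
    (hS₂ : S₂ = σ₁ (σ₂ S₁)) (hρ₁ : ρ₁ (σ₂ S₁) = 0) :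
    ρ₁ (S₂ * S₁) = S₂ * ρ₁ S₂ + ρ₁ (ρ₂ S₁) := by
  rw [← h₂.sigma_mul_add_rho_eq_mul hS₁ hρ₂, map_add, h₁.map_mul_rho, hρ₁, zero_mul,
    add_zero, ← hS₂]

end Consequences

section Transfer

variable {K A A' C : Type*} [CommSemiring K] [Semiring A] [Algebra K A] [Semiring A']
  [Algebra K A'] [Semiring C] [Algebra K C] {σ ρ : A →ₗ[K] A} {S : A}

theorem conj (h : QuantumWreathCompatible σ ρ S) (e : A ≃ₐ[K] A') :
    QuantumWreathCompatible (e.toLinearEquiv.conj σ) (e.toLinearEquiv.conj ρ) (e S) where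
  map_mul_sigma a b := by simp [h.map_mul_sigma]
  map_mul_rho a b := by simp [h.map_mul_rho]
  sigma_sigma_mul_add x := by simpa using congrArg e (h.sigma_sigma_mul_add (e.symm x))

theorem rTensor (h : QuantumWreathCompatible σ ρ S) :
    QuantumWreathCompatible (σ.rTensor C) (ρ.rTensor C) (S ⊗ₜ (1 : C)) where
  map_mul_sigma x y := by
    induction x using TensorProduct.induction_on with
    | zero => simp
    | add x x' hx hx' => simp only [add_mul, map_add, hx, hx']
    | tmul a c =>
      induction y using TensorProduct.induction_on with
      | zero => simp
      | add y y' hy hy' => simp only [mul_add, map_add, hy, hy']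
      | tmul b d => simp [Algebra.TensorProduct.tmul_mul_tmul, h.map_mul_sigma]
  map_mul_rho x y := by
    induction x using TensorProduct.induction_on with
    | zero => simp
    | add x x' hx hx' => simp only [add_mul, map_add, hx, hx']; abel
    | tmul a c =>
      induction y using TensorProduct.induction_on with
      | zero => simp
      | add y y' hy hy' => simp only [mul_add, map_add, hy, hy']; abel
      | tmul b d => simp [Algebra.TensorProduct.tmul_mul_tmul, h.map_mul_rho, add_tmul]
  sigma_sigma_mul_add x := by
    induction x using TensorProduct.induction_on with
    | zero => simp
    | tmul a c => simp [Algebra.TensorProduct.tmul_mul_tmul, ← add_tmul, h.sigma_sigma_mul_add]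
    | add x y hx hy => simp only [map_add, add_mul, mul_add, ← hx, ← hy]; abel

end Transfer

end QuantumWreathCompatible

section TripleTensor

variable {K B} {σ ρ : (B ⊗[K] B) →ₗ[K] (B ⊗[K] B)} {S : B ⊗[K] B}

theorem QuantumWreathCompatible.act1 (h : QuantumWreathCompatible σ ρ S) :
    QuantumWreathCompatible (act1 K B σ) (act1 K B ρ) (el1 K B S) :=
  (h.rTensor (C := B)).conj (Algebra.TensorProduct.assoc K K K B B B)

theorem act2_eq_conj (φ : (B ⊗[K] B) →ₗ[K] (B ⊗[K] B)) :
    act2 K B φ = (Algebra.TensorProduct.comm K (B ⊗[K] B) B).toLinearEquiv.conj (φ.rTensor B) :=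
  (LinearMap.comm_comp_rTensor_comp_comm_eq φ).symm

theorem QuantumWreathCompatible.act2 (h : QuantumWreathCompatible σ ρ S) :
    QuantumWreathCompatible (act2 K B σ) (act2 K B ρ) (el2 K B S) := by
  have hS : el2 K B S = Algebra.TensorProduct.comm K (B ⊗[K] B) B (S ⊗ₜ 1) := rfl
  rw [act2_eq_conj, act2_eq_conj, hS]
  exact (h.rTensor (C := B)).conj (Algebra.TensorProduct.comm K (B ⊗[K] B) B)

end TripleTensor

theorem stmt12 (S R : B ⊗[K] B)
    (σ ρ : (B ⊗[K] B) →ₗ[K] (B ⊗[K] B))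
    -- (P2)
    (hP2σ : ∀ a b : B ⊗[K] B, σ (a * b) = σ a * σ b)
    (hP2ρ : ∀ a b : B ⊗[K] B, ρ (a * b) = σ a * ρ b + ρ a * b)
    -- (P4)
    (hP4a : ∀ x : B ⊗[K] B, σ (σ x) * S + ρ (σ x) + σ (ρ x) = S * σ x) :
    ∀ σi ρi : Fin 2 → ((B ⊗[K] (B ⊗[K] B)) →ₗ[K] (B ⊗[K] (B ⊗[K] B))),
    ∀ Si Ri : Fin 2 → B ⊗[K] (B ⊗[K] B),
      σi = ![act1 K B σ, act2 K B σ] →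
      ρi = ![act1 K B ρ, act2 K B ρ] →
      Si = ![el1 K B S, el2 K B S] →
      Ri = ![el1 K B R, el2 K B R] →
      -- (P5)
      (∀ i j : Fin 2, i ≠ j →
        (∀ x, σi i (σi j (σi i x)) = σi j (σi i (σi j x))) ∧
        (∀ x, ρi i (σi j (σi i x)) = σi j (σi i (ρi j x)))) →
      -- (P6)
      (∀ i j : Fin 2, i ≠ j → ∀ x,
        ρi i (σi j (ρi i x))
          = σi j (ρi i (σi j x)) * Si j + ρi j (ρi i (σi j x)) + σi j (ρi i (ρi j x))) →
      -- (P7)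
      (∀ i j : Fin 2, i ≠ j → ∀ x,
        ρi i (ρi j (ρi i x)) + σi i (ρi j (σi i x)) * Ri i
          = ρi j (ρi i (ρi j x)) + σi j (ρi i (σi j x)) * Ri j) →
      -- (P8)
      (∀ i j : Fin 2, i ≠ j →
        Si i = σi j (σi i (Si j)) ∧ Ri i = σi j (σi i (Ri j)) ∧
        ρi j (σi i (Si j)) = 0 ∧ ρi j (σi i (Ri j)) = 0) →
      ∀ i j : Fin 2, i ≠ j →
        -- (a)
        (σi i (Si j) * Si i + ρi i (Si j) = Si i * Si j) ∧
        -- (b)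
        (σi i (Si j * Si i) = Si j * σi i (Si j) + σi i (ρi j (Si i))) ∧
        -- (c)
        (ρi i (Si j * Si i) = Si j * ρi i (Si j) + ρi i (ρi j (Si i))) := by
  intro σi ρi Si _ hσ hρ hS _ _ _ _ hP8 i j hij
  have hcompat : ∀ k, QuantumWreathCompatible (σi k) (ρi k) (Si k) := by
    have h : QuantumWreathCompatible σ ρ S := ⟨hP2σ, hP2ρ, hP4a⟩
    subst hσ hρ hS
    exact Fin.forall_fin_two.2 ⟨h.act1, h.act2⟩
  obtain ⟨hSi, -, hρj, -⟩ := hP8 i j hij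
  obtain ⟨hSj, -, hρi, -⟩ := hP8 j i hij.symm
  exact ⟨(hcompat i).sigma_mul_add_rho_eq_mul hSj hρi,
    (hcompat i).sigma_mul_eq (hcompat j) hSi hρj hSj,
    (hcompat i).rho_mul_eq (hcompat j) hSi hρj hSj hρi⟩

end
end

section
/- Let F ⊇ F' be rings such that F is projective as a left F'-module, and let both F and F' be symmetric algebras over a field K. Then for every F'-module N, the induced module F ⊗_{F'} N is naturally isomorphic to the coinduced module Hom_{F'}(F, N) as F-modules. -/
/-!
The symmetrizing forms define a relative trace `E : F → F'`, the `F'`-bimodule map with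
`lF' (E z * d) = lF (z * d)`, and `z ↦ E (· * z)` maps `F` onto `Hom_{F'}(F, F')`: the extension
is Frobenius. Projectivity then yields a dual basis `(x i, v i)` with `b = ∑ E (b * x i) • v i`
and `b = ∑ x i * E (v i * b)`. With these, `g ↦ ∑ x i • g (v i)` is `F`-linear on
`Hom_{F'}(F, Q)`, and precomposing it with `ι m = E (·) • m` recovers every `F'`-linear map,
uniquely because every `φ` equals `∑ x i • ι (φ (v i))`.
-/

section Coinduced

variable {K F : Type} [Field K] [Ring F] [Algebra K F] (F' : Subalgebra K F)
variable (N : Type) [AddCommGroup N] [Module ↥F' N]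

/-- The element `x * a ∈ F`, viewed via right multiplication; `F` is a left
`F'`-module and right multiplication by `a` is `F'`-linear. -/
def rmul (a : F) : F →ₗ[↥F'] F where
  toFun x := x * a
  map_add' x y := add_mul x y a
  map_smul' c x := by
    simp only [RingHom.id_apply]
    show ((c : F) * x) * a = (c : F) * (x * a)
    exact mul_assoc _ _ _

/-- The left `F`-module structure on the coinduced module
`Hom_{F'}(F, N)`: `(a • φ)(x) = φ(x * a)`. -/
noncomputable instance coindModule : Module F (F →ₗ[↥F'] N) where
  smul a φ := φ.comp (rmul F' a)
  one_smul φ := by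
    apply LinearMap.ext; intro x
    show φ (x * 1) = φ x
    rw [mul_one]
  mul_smul a b φ := by
    apply LinearMap.ext; intro x
    show φ (x * (a * b)) = φ ((x * a) * b)
    rw [mul_assoc]
  smul_zero a := rfl
  smul_add a φ ψ := rfl
  add_smul a b φ := by
    apply LinearMap.ext; intro x
    show φ (x * (a + b)) = φ (x * a) + φ (x * b)
    rw [mul_add, map_add]
  zero_smul φ := by
    apply LinearMap.ext; intro x
    show φ (x * 0) = 0
    rw [mul_zero, map_zero]

end Coinduced

section TraceForm

variable {K R : Type} [Field K] [Ring R] [Algebra K R] (l : R →ₗ[K] K)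

lemma eq_of_forall_trace_mul_eq (hl : ∀ a : R, (∀ b : R, l (a * b) = 0) → a = 0) {a a' : R}
    (h : ∀ b, l (a * b) = l (a' * b)) : a = a' :=
  sub_eq_zero.mp <| hl _ fun b => by rw [sub_mul, map_sub, h, sub_self]

variable [FiniteDimensional K R]

noncomputable def traceDualEquiv (hl : ∀ a : R, (∀ b : R, l (a * b) = 0) → a = 0) :
    R ≃ₗ[K] Module.Dual K R :=
  have hinj : Function.Injective ((LinearMap.mul K R).compr₂ l) := fun _ _ h =>
    eq_of_forall_trace_mul_eq l hl (LinearMap.congr_fun h)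
  LinearEquiv.ofBijective _ ⟨hinj, (LinearMap.injective_iff_surjective_of_finrank_eq_finrank
    Subspace.dual_finrank_eq.symm).mp hinj⟩

lemma traceDualEquiv_symm_mul (hl : ∀ a : R, (∀ b : R, l (a * b) = 0) → a = 0)
    (ψ : Module.Dual K R) (b : R) : l ((traceDualEquiv l hl).symm ψ * b) = ψ b :=
  LinearMap.congr_fun ((traceDualEquiv l hl).apply_symm_apply ψ) b

end TraceForm

section RelativeTrace

variable {K F : Type} [Field K] [Ring F] [Algebra K F] {F' : Subalgebra K F}
  [FiniteDimensional K F'] (lF : F →ₗ[K] K) (lF' : F' →ₗ[K] K)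
  (hF'nd : ∀ a : F', (∀ b : F', lF' (a * b) = 0) → a = 0)
  (hFsym : ∀ a b : F, lF (a * b) = lF (b * a)) (hF'sym : ∀ a b : F', lF' (a * b) = lF' (b * a))

noncomputable def relTrace : F →ₗ[F'] F' where
  toFun z := (traceDualEquiv lF' hF'nd).symm
    (((LinearMap.mul K F).compr₂ lF).compl₂ F'.val.toLinearMap z)
  map_add' z z' := by simp only [map_add]
  map_smul' c z := eq_of_forall_trace_mul_eq lF' hF'nd fun d => by
    simp only [RingHom.id_apply, smul_eq_mul]
    rw [mul_assoc c, hF'sym c, mul_assoc, traceDualEquiv_symm_mul, traceDualEquiv_symm_mul]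
    simp only [LinearMap.compl₂_apply, LinearMap.compr₂_apply, LinearMap.mul_apply',
      AlgHom.toLinearMap_apply, Subalgebra.coe_val, Subalgebra.coe_mul, Subalgebra.smul_def,
      smul_eq_mul]
    rw [mul_assoc, hFsym, mul_assoc]

local notation "E" => relTrace lF lF' hF'nd hFsym hF'sym

lemma trace_relTrace_mul (z : F) (d : F') : lF' (E z * d) = lF (z * d) :=
  traceDualEquiv_symm_mul lF' hF'nd _ d

lemma relTrace_mul (z : F) (c : F') : E (z * c) = E z * c :=
  eq_of_forall_trace_mul_eq lF' hF'nd fun d => by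
    rw [trace_relTrace_mul, mul_assoc (E z), trace_relTrace_mul, Subalgebra.coe_mul, mul_assoc]

lemma eq_zero_of_forall_relTrace_mul_eq_zero (hFnd : ∀ a : F, (∀ b : F, lF (a * b) = 0) → a = 0)
    {z : F} (h : ∀ b, E (b * z) = 0) : z = 0 :=
  hFnd z fun b => by
    have := trace_relTrace_mul lF lF' hF'nd hFsym hF'sym (b * z) 1
    rwa [h, zero_mul, map_zero, Subalgebra.coe_one, mul_one, hFsym, eq_comm] at this

lemma exists_relTrace_mul_eq [FiniteDimensional K F]
    (hFnd : ∀ a : F, (∀ b : F, lF (a * b) = 0) → a = 0) (φ : F →ₗ[F'] F') :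
    ∃ z, ∀ b, E (b * z) = φ b :=
  ⟨(traceDualEquiv lF hFnd).symm (lF' ∘ₗ φ.restrictScalars K), fun b =>
    eq_of_forall_trace_mul_eq lF' hF'nd fun d => by
      rw [trace_relTrace_mul, mul_assoc, hFsym b, mul_assoc, traceDualEquiv_symm_mul]
      change lF' (φ (d • b)) = _
      rw [map_smul, smul_eq_mul, hF'sym]⟩

end RelativeTrace

section FrobeniusExtension

variable {K F : Type} [Field K] [Ring F] [Algebra K F] {F' : Subalgebra K F} (E : F →ₗ[F'] F')

lemma exists_dual_basis [Module.Projective F' F] [Module.Finite F' F]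
    (hsurj : ∀ φ : F →ₗ[F'] F', ∃ z, ∀ b, E (b * z) = φ b) :
    ∃ (n : ℕ) (x v : Fin n → F), ∀ b, ∑ i, E (b * x i) • v i = b := by
  classical
  obtain ⟨n, f, g, -, -, hfg⟩ := Module.Finite.exists_comp_eq_id_of_projective F' F
  choose x hx using fun i => hsurj (LinearMap.proj i ∘ₗ g)
  refine ⟨n, x, fun i => f fun j => if i = j then 1 else 0, fun b => ?_⟩
  calc ∑ i, E (b * x i) • f (fun j => if i = j then 1 else 0) = f (g b) := by
        simp only [hx, LinearMap.pi_apply_eq_sum_univ f (g b)]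
        rfl
    _ = b := LinearMap.congr_fun hfg b

variable {n : ℕ} {x v : Fin n → F}

lemma map_eq_sum_smul {M : Type} [AddCommGroup M] [Module F' M]
    (hB : ∀ b, ∑ i, E (b * x i) • v i = b) (φ : F →ₗ[F'] M) (b : F) :
    φ b = ∑ i, E (b * x i) • φ (v i) := by
  conv_lhs => rw [← hB b]
  simp only [map_sum, map_smul]

lemma sum_mul_apply_mul_eq (hE : ∀ z (c : F'), E (z * c) = E z * c)
    (hinj : ∀ z, (∀ b, E (b * z) = 0) → z = 0) (hB : ∀ b, ∑ i, E (b * x i) • v i = b) (b : F) :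
    ∑ i, x i * E (v i * b) = b := by
  have key : ∀ c, E (c * ∑ i, x i * E (v i * b)) = E (c * b) := fun c => calc
    E (c * ∑ i, x i * E (v i * b)) = ∑ i, E (c * x i) * E (v i * b) := by
      simp only [Finset.mul_sum, ← mul_assoc, map_sum, hE]
    _ = E ((∑ i, E (c * x i) • v i) * b) := by
      simp only [Finset.sum_mul, map_sum, smul_mul_assoc, map_smul, smul_eq_mul]
    _ = E (c * b) := by rw [hB]
  exact sub_eq_zero.mp (hinj _ fun c => by rw [mul_sub, map_sub, key, sub_self])

variable {N Q : Type} [AddCommGroup N] [Module F' N] [AddCommGroup Q] [Module F Q]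

def coindUnit (hE : ∀ z (c : F'), E (z * c) = E z * c) : N →ₗ[F'] (F →ₗ[F'] N) where
  toFun m := E.smulRight m
  map_add' m m' := LinearMap.ext fun b => smul_add _ _ _
  map_smul' c m := LinearMap.ext fun b => by
    change E b • c • m = E (b * c) • m
    rw [hE, mul_smul]

lemma sum_smul_map_mul_eq (hA : ∀ b, ∑ i, x i * E (v i * b) = b)
    (hB : ∀ b, ∑ i, E (b * x i) • v i = b) (g : F →ₗ[F'] Q) (a : F) :
    ∑ i, x i • g (v i * a) = a • ∑ i, x i • g (v i) := calc
  ∑ i, x i • g (v i * a) = ∑ i, x i • ∑ j, E (v i * a * x j) • g (v j) :=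
    Finset.sum_congr rfl fun i _ => by rw [map_eq_sum_smul E hB g (v i * a)]
  _ = ∑ j, (∑ i, x i * E (v i * (a * x j))) • g (v j) := by
    simp only [Finset.smul_sum, Finset.sum_smul, Subalgebra.smul_def, smul_smul, mul_assoc]
    exact Finset.sum_comm
  _ = a • ∑ i, x i • g (v i) := by simp only [hA, Finset.smul_sum, mul_smul]

def coindLift (hA : ∀ b, ∑ i, x i * E (v i * b) = b) (hB : ∀ b, ∑ i, E (b * x i) • v i = b)
    (f : N →ₗ[F'] Q) : (F →ₗ[F'] N) →ₗ[F] Q where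
  toFun φ := ∑ i, x i • f (φ (v i))
  map_add' φ ψ := by simp only [LinearMap.add_apply, map_add, smul_add, Finset.sum_add_distrib]
  map_smul' a φ := sum_smul_map_mul_eq E hA hB (f ∘ₗ φ) a

lemma coindLift_coindUnit (hE : ∀ z (c : F'), E (z * c) = E z * c)
    (hA : ∀ b, ∑ i, x i * E (v i * b) = b) (hB : ∀ b, ∑ i, E (b * x i) • v i = b)
    (f : N →ₗ[F'] Q) (m : N) : coindLift E hA hB f (coindUnit E hE m) = f m := calc
  ∑ i, x i • f (E (v i) • m) = (∑ i, x i * E (v i * 1)) • f m := by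
    simp only [map_smul, Subalgebra.smul_def, smul_smul, mul_one, Finset.sum_smul]
  _ = f m := by rw [hA, one_smul]

lemma eq_sum_smul_coindUnit (hE : ∀ z (c : F'), E (z * c) = E z * c)
    (hB : ∀ b, ∑ i, E (b * x i) • v i = b) (φ : F →ₗ[F'] N) :
    φ = ∑ i, x i • coindUnit E hE (φ (v i)) :=
  LinearMap.ext fun b => by
    rw [LinearMap.sum_apply, map_eq_sum_smul E hB φ b]
    rfl

theorem existsUnique_comp_coindUnit (hE : ∀ z (c : F'), E (z * c) = E z * c)
    (hA : ∀ b, ∑ i, x i * E (v i * b) = b) (hB : ∀ b, ∑ i, E (b * x i) • v i = b)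
    (f : N →ₗ[F'] Q) : ∃! g : (F →ₗ[F'] N) →ₗ[F] Q, ∀ m, g (coindUnit E hE m) = f m := by
  refine ⟨coindLift E hA hB f, coindLift_coindUnit E hE hA hB f, fun g hg => ?_⟩
  ext φ
  conv_lhs => rw [eq_sum_smul_coindUnit E hE hB φ]
  simp only [map_sum, map_smul, hg]
  rfl

end FrobeniusExtension

/-- let `F ⊇ F'` with `F` projective as a left `F'`-module and
both `F` and `F'` symmetric algebras over a field `K` (symmetry expressed by a
nondegenerate symmetrizing trace form).  Then for every `F'`-module `N` the
induced module `F ⊗_{F'} N` is naturally isomorphic to the coinduced module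
`Hom_{F'}(F, N)` as `F`-modules; equivalently, the coinduced module
`Hom_{F'}(F, N)` satisfies the universal property of the induced module. -/
theorem stmt15 (K F : Type) [Field K] [Ring F] [Algebra K F] [FiniteDimensional K F]
    (F' : Subalgebra K F)
    (hproj : Module.Projective ↥F' F)
    (lF : F →ₗ[K] K) (hFsym : ∀ a b : F, lF (a * b) = lF (b * a))
    (hFnd : ∀ a : F, (∀ b : F, lF (a * b) = 0) → a = 0)
    (lF' : ↥F' →ₗ[K] K) (hF'sym : ∀ a b : ↥F', lF' (a * b) = lF' (b * a))
    (hF'nd : ∀ a : ↥F', (∀ b : ↥F', lF' (a * b) = 0) → a = 0)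
    (N : Type) [AddCommGroup N] [Module ↥F' N] :
    ∃ ι : N →ₗ[↥F'] (F →ₗ[↥F'] N),
      ∀ (Q : Type) (_ : AddCommGroup Q) (_ : Module F Q) (f : N →ₗ[↥F'] Q),
        ∃! g : (F →ₗ[↥F'] N) →ₗ[F] Q, ∀ x : N, g (ι x) = f x := by
  have : Module.Finite F' F := Module.Finite.of_restrictScalars_finite K F' F
  set E := relTrace lF lF' hF'nd hFsym hF'sym
  have hE := relTrace_mul lF lF' hF'nd hFsym hF'sym
  obtain ⟨n, x, v, hB⟩ :=
    exists_dual_basis E (exists_relTrace_mul_eq lF lF' hF'nd hFsym hF'sym hFnd)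
  have hA := sum_mul_apply_mul_eq E hE
    (fun _ => eq_zero_of_forall_relTrace_mul_eq_zero lF lF' hF'nd hFsym hF'sym hFnd) hB
  exact ⟨coindUnit E hE, fun Q _ _ f => existsUnique_comp_coindUnit E hE hA hB f⟩
end

section
/- Let S be a finite-dimensional K-algebra, e ∈ S an idempotent, G(N) = Hom_{eSe}(eS, N), and suppose Y is an indecomposable eSe-module such that every composition factor of the socle of G(Y) is not annihilated by e. Then G(Y) is an indecomposable S-module. -/
/-!
Evaluation at `e ∈ eS` is an additive map `G(Y) → Y` commuting with the `eSe`-action, and it is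
surjective: `y` is the value of `s ↦ (se) • y`. A decomposition `G(Y) = P ⊕ Q` is therefore sent to
a pair of complementary submodules of `Y`. Disjointness holds because `e • φ` only depends on
`φ(e)`, and an `S`-submodule `P` with zero image vanishes because `φ(s) = (s • φ)(e)`. So
indecomposability of `Y` forces `P = 0` or `Q = 0`.
-/

section SchurG

variable {S : Type} [Ring S] {e : S} (he : e * e = e)

namespace ES

def unit : ES (e := e) := ⟨e, show e * e = e from he⟩

def mulRightE : ES (e := e) →ₗ[Corner he] Corner he where
  toFun s := ⟨s.1 * e, by rw [← mul_assoc, ES.e_mul' s, mul_assoc, he]⟩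
  map_add' s t := Subtype.ext (add_mul s.1 t.1 e)
  map_smul' c s := Subtype.ext (mul_assoc c.1 s.1 e)

theorem mulRight_e (s : ES (e := e)) : s.mulRight e = mulRightE he s • unit he :=
  Subtype.ext (show s.1 * e = s.1 * e * e by rw [mul_assoc, he])

variable {he}

theorem unit_mulRight (s : ES (e := e)) : (unit he).mulRight s.1 = s :=
  Subtype.ext (ES.e_mul' s)

theorem unit_mulRight_corner (c : Corner he) : (unit he).mulRight c.1 = c • unit he :=
  Subtype.ext ((Corner.e_mul c).trans (Corner.mul_e c).symm)

theorem mulRightE_unit : mulRightE he (unit he) = 1 :=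
  Subtype.ext he

end ES

namespace SchurG

variable {he} {N : Type} [AddCommGroup N] [Module (Corner he) N]

theorem smul_apply (a : S) (φ : SchurG he N) (s : ES (e := e)) :
    (a • φ) s = φ (s.mulRight a) :=
  rfl

theorem smul_apply_unit (φ : SchurG he N) (s : ES (e := e)) : (s.1 • φ) (ES.unit he) = φ s := by
  rw [smul_apply, ES.unit_mulRight]

theorem e_smul_apply_unit (φ : SchurG he N) : (e • φ) (ES.unit he) = φ (ES.unit he) := by
  simpa only [ES.unit] using smul_apply_unit φ (ES.unit he)

theorem corner_smul_apply_unit (c : Corner he) (φ : SchurG he N) :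
    (c.1 • φ) (ES.unit he) = c • φ (ES.unit he) := by
  rw [smul_apply, ES.unit_mulRight_corner, map_smul]

theorem e_smul_eq_zero (φ : SchurG he N) (h : φ (ES.unit he) = 0) : e • φ = 0 :=
  LinearMap.ext fun s => by
    rw [smul_apply, ES.mulRight_e he, map_smul, h, smul_zero, LinearMap.zero_apply]

variable (he) in
/-- The map `s ↦ (se) • y`. -/
def ofElement (y : N) : SchurG he N :=
  (LinearMap.toSpanSingleton (Corner he) N y).comp (ES.mulRightE he)

theorem ofElement_apply_unit (y : N) : ofElement he y (ES.unit he) = y := by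
  simp only [ofElement, LinearMap.comp_apply, ES.mulRightE_unit,
    LinearMap.toSpanSingleton_apply, one_smul]

instance [Nontrivial N] : Nontrivial (SchurG he N) := by
  obtain ⟨y, hy⟩ := exists_ne (0 : N)
  refine ⟨ofElement he y, 0, fun h => hy ?_⟩
  simpa only [ofElement_apply_unit, LinearMap.zero_apply] using congrArg (· (ES.unit he)) h

def evalSubmodule (P : Submodule S (SchurG he N)) : Submodule (Corner he) N where
  carrier := {y | ∃ φ ∈ P, φ (ES.unit he) = y}
  zero_mem' := ⟨0, P.zero_mem, rfl⟩
  add_mem' := by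
    rintro _ _ ⟨φ, hφ, rfl⟩ ⟨ψ, hψ, rfl⟩
    exact ⟨φ + ψ, P.add_mem hφ hψ, rfl⟩
  smul_mem' := by
    rintro c _ ⟨φ, hφ, rfl⟩
    exact ⟨c.1 • φ, P.smul_mem _ hφ, corner_smul_apply_unit c φ⟩

theorem eq_bot_of_evalSubmodule_eq_bot {P : Submodule S (SchurG he N)}
    (h : evalSubmodule P = ⊥) : P = ⊥ := by
  rw [Submodule.eq_bot_iff] at h ⊢
  intro φ hφ
  ext s
  rw [LinearMap.zero_apply, ← smul_apply_unit φ s]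
  exact h _ ⟨s.1 • φ, P.smul_mem _ hφ, rfl⟩

theorem disjoint_evalSubmodule {P Q : Submodule S (SchurG he N)} (hPQ : Disjoint P Q) :
    Disjoint (evalSubmodule P) (evalSubmodule Q) := by
  rw [Submodule.disjoint_def]
  rintro _ ⟨φ, hφ, rfl⟩ ⟨ψ, hψ, hψφ⟩
  have he_smul : e • φ = e • ψ := by
    rw [← sub_eq_zero, ← smul_sub]
    exact e_smul_eq_zero _ (by rw [LinearMap.sub_apply, hψφ, sub_self])
  have h_zero : e • φ = 0 :=
    Submodule.disjoint_def.mp hPQ _ (P.smul_mem e hφ) (he_smul ▸ Q.smul_mem e hψ)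
  rw [← e_smul_apply_unit, h_zero, LinearMap.zero_apply]

theorem codisjoint_evalSubmodule {P Q : Submodule S (SchurG he N)} (hPQ : Codisjoint P Q) :
    Codisjoint (evalSubmodule P) (evalSubmodule Q) := by
  rw [codisjoint_iff, eq_top_iff]
  intro y _
  obtain ⟨φ, hφ, ψ, hψ, hsum⟩ := Submodule.mem_sup.mp (hPQ.eq_top ▸ Submodule.mem_top :
    ofElement he y ∈ P ⊔ Q)
  refine Submodule.mem_sup.mpr ⟨_, ⟨φ, hφ, rfl⟩, _, ⟨ψ, hψ, rfl⟩, ?_⟩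
  rw [← LinearMap.add_apply, hsum, ofElement_apply_unit]

theorem eq_bot_or_eq_bot_of_isCompl
    (hN : ∀ p q : Submodule (Corner he) N, IsCompl p q → p = ⊥ ∨ q = ⊥)
    {P Q : Submodule S (SchurG he N)} (hPQ : IsCompl P Q) : P = ⊥ ∨ Q = ⊥ :=
  (hN _ _ ⟨disjoint_evalSubmodule hPQ.disjoint, codisjoint_evalSubmodule hPQ.codisjoint⟩).imp
    eq_bot_of_evalSubmodule_eq_bot eq_bot_of_evalSubmodule_eq_bot

end SchurG

end SchurG

theorem stmt19_general (S : Type) [Ring S]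
    (e : S) (he : e * e = e)
    (Y : Type) [AddCommGroup Y] [Module (Corner he) Y]
    (hYne : ¬ Subsingleton Y)
    (hYindec : ∀ p q : Submodule (Corner he) Y, IsCompl p q → p = ⊥ ∨ q = ⊥) :
    ¬ Subsingleton (SchurG he Y) ∧
      ∀ p q : Submodule S (SchurG he Y), IsCompl p q → p = ⊥ ∨ q = ⊥ := by
  have : Nontrivial Y := not_subsingleton_iff_nontrivial.mp hYne
  exact ⟨not_subsingleton _, fun _ _ => SchurG.eq_bot_or_eq_bot_of_isCompl hYindec⟩

/-- let `S` be a finite-dimensional `K`-algebra, `e ∈ S` an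
idempotent, `G(N) = Hom_{eSe}(eS, N)`, and let `Y` be an indecomposable
`eSe`-module such that every composition factor of the socle of `G(Y)` is not
annihilated by `e` (equivalently: every simple submodule `L` of `G(Y)` is not
annihilated by `e`).  Then `G(Y)` is an indecomposable `S`-module. -/
theorem stmt19 (K S : Type) [Field K] [Ring S] [Algebra K S] [FiniteDimensional K S]
    (e : S) (he : e * e = e)
    (Y : Type) [AddCommGroup Y] [Module (Corner he) Y]
    (hYne : ¬ Subsingleton Y)
    (hYindec : ∀ p q : Submodule (Corner he) Y, IsCompl p q → p = ⊥ ∨ q = ⊥)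
    (hsocle : ∀ L : Submodule S (SchurG he Y), IsSimpleModule S ↥L →
      ∃ m ∈ L, e • m ≠ 0) :
    ¬ Subsingleton (SchurG he Y) ∧
      ∀ p q : Submodule S (SchurG he Y), IsCompl p q → p = ⊥ ∨ q = ⊥ :=
  stmt19_general S e he Y hYne hYindec
end
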